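/- arXiv:2103.10347 — 2 statements merged into one kernel-verified Lean document; each statement's English description precedes it below -/
import Mathlib

section
/- Let λ > −1/2 with λ ≠ 0, let q > 0 with q not a natural number, set m = ⌈q⌉, and let j ∈ ℕ with j ≥ m. Then for every x > 0 the Caputo fractional derivative of order q of the shifted monic ultraspherical polynomial Č_j^λ satisfies D^q Č_j^λ(x) = H_j · Σ_{r=0}^{⌊j/2⌋} Σ_{k=m}^{j−2r} (−1)^{j−r−k} · Γ(j−r+λ) · 2^{j−2r+k} / (Γ(λ) · r! · Γ(k−q+1) · (j−2r−k)!) · x^{k−q}, where an inner sum is empty whenever j−2r < m. -/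
/-!
Through the three-term recurrence, `C_n^λ(t)` is the sum over `r ≤ n/2` of
`(-1)^r (λ)_{n-r} / (r! (n-2r)!) · (2t)^{n-2r}`, with `(λ)_k` the rising factorial. Substituting
`t = 2x - 1` and expanding by the binomial theorem writes `Č_j^λ` as a combination of monomials
`x^k`.
The Caputo derivative is linear on smooth functions, kills `x^k` for `k < m`, and sends `x^k` to
`k!/Γ(k-q+1) · x^{k-q}` for `k ≥ m` by the Beta integral. Finally `(λ)_{j-r} = Γ(j-r+λ)/Γ(λ)`.
-/

open Real Polynomial MeasureTheory

/-- Gegenbauer (ultraspherical) polynomials defined by the three-term recurrence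
`C_0 = 1`, `C_1 = 2λt`, `(j+1)C_{j+1} = 2(j+λ) t C_j - (j+2λ-1) C_{j-1}`. -/
noncomputable def gegen (lam : ℝ) : ℕ → Polynomial ℝ
  | 0 => 1
  | 1 => Polynomial.C (2 * lam) * Polynomial.X
  | (j + 2) =>
      Polynomial.C (2 * ((j : ℝ) + 1 + lam) / ((j : ℝ) + 2)) * Polynomial.X * gegen lam (j + 1)
        - Polynomial.C (((j : ℝ) + 1 + 2 * lam - 1) / ((j : ℝ) + 2)) * gegen lam j

/-- `H_j = 2^(-2j) j! Γ(λ) / Γ(j+λ)`. -/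
noncomputable def Hcoef (lam : ℝ) (j : ℕ) : ℝ :=
  (j.factorial : ℝ) * Real.Gamma lam / (4 ^ j * Real.Gamma ((j : ℝ) + lam))

/-- Shifted monic ultraspherical polynomial `Č_j^λ(x) = H_j C_j^λ(2x-1)`. -/
noncomputable def shiftedMonicUltra (lam : ℝ) (j : ℕ) : Polynomial ℝ :=
  Polynomial.C (Hcoef lam j) * (gegen lam j).comp (Polynomial.C 2 * Polynomial.X - 1)

/-- Caputo fractional derivative of order `q` (with `m = ⌈q⌉`). -/
noncomputable def caputo (q : ℝ) (f : ℝ → ℝ) (x : ℝ) : ℝ :=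
  (1 / Real.Gamma ((⌈q⌉₊ : ℝ) - q)) *
    ∫ t in (0:ℝ)..x, (x - t) ^ ((⌈q⌉₊ : ℝ) - q - 1) * iteratedDeriv ⌈q⌉₊ f t

lemma Real.Gamma_natCast_add_eq_mul_ascPochhammer {z : ℝ} (hz : ∀ k : ℕ, z ≠ -k) (n : ℕ) :
    Real.Gamma (n + z) = Real.Gamma z * (ascPochhammer ℝ n).eval z := by
  induction n with
  | zero => simp
  | succ n ih =>
    have hnz : (n : ℝ) + z ≠ 0 := fun h => hz n (by linarith)
    rw [Nat.cast_succ, add_right_comm, Real.Gamma_add_one hnz, ih, ascPochhammer_succ_eval]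
    ring

lemma integral_sub_rpow_mul_rpow {a b x : ℝ} (ha : 0 < a) (hb : 0 < b) (hx : 0 < x) :
    ∫ t in (0:ℝ)..x, (x - t) ^ (b - 1) * t ^ (a - 1) =
      Real.Gamma a * Real.Gamma b / Real.Gamma (a + b) * x ^ (a + b - 1) := by
  have hB := Complex.betaIntegral_scaled a b hx
  rw [Complex.betaIntegral_eq_Gamma_mul_div _ _ (by simpa) (by simpa)] at hB
  apply Complex.ofReal_injective
  rw [← intervalIntegral.integral_ofReal, mul_comm]
  convert hB using 1
  · refine intervalIntegral.integral_congr fun t ht => ?_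
    rw [Set.uIcc_of_le hx.le] at ht
    push_cast
    rw [Complex.ofReal_cpow ht.1, Complex.ofReal_cpow (sub_nonneg.2 ht.2)]
    push_cast; ring
  · push_cast
    rw [Complex.ofReal_cpow hx.le]
    simp [← Complex.ofReal_add, Complex.Gamma_ofReal]

section Caputo

variable {q : ℝ}

lemma caputo_const_mul (c : ℝ) (f : ℝ → ℝ) (x : ℝ) :
    caputo q (fun y => c * f y) x = c * caputo q f x := by
  simp only [caputo, iteratedDeriv_const_mul_field, mul_left_comm _ c,
    intervalIntegral.integral_const_mul]

lemma intervalIntegrable_caputoKernel (hq : q < ⌈q⌉₊) (x : ℝ) :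
    IntervalIntegrable (fun t => (x - t) ^ ((⌈q⌉₊ : ℝ) - q - 1)) volume 0 x := by
  simpa using (intervalIntegral.intervalIntegrable_rpow' (a := x) (b := 0)
    (r := (⌈q⌉₊ : ℝ) - q - 1) (by linarith)).comp_sub_left x

lemma caputo_finset_sum {ι : Type*} (s : Finset ι) (f : ι → ℝ → ℝ)
    (hf : ∀ i ∈ s, ContDiff ℝ ⌈q⌉₊ (f i)) (hq : q < ⌈q⌉₊) (x : ℝ) :
    caputo q (fun y => ∑ i ∈ s, f i y) x = ∑ i ∈ s, caputo q (f i) x := by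
  have hderiv (t : ℝ) : iteratedDeriv ⌈q⌉₊ (fun y => ∑ i ∈ s, f i y) t =
      ∑ i ∈ s, iteratedDeriv ⌈q⌉₊ (f i) t :=
    iteratedDeriv_fun_sum fun i hi => (hf i hi).contDiffAt
  have hint : ∀ i ∈ s, IntervalIntegrable
      (fun t => (x - t) ^ ((⌈q⌉₊ : ℝ) - q - 1) * iteratedDeriv ⌈q⌉₊ (f i) t) volume 0 x :=
    fun i hi => (intervalIntegrable_caputoKernel hq x).mul_continuousOn
      ((hf i hi).continuous_iteratedDeriv _ le_rfl).continuousOn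
  simp only [caputo, hderiv, Finset.mul_sum]
  rw [intervalIntegral.integral_finsetSum hint, Finset.mul_sum]

lemma caputo_pow (hq : q < ⌈q⌉₊) {x : ℝ} (hx : 0 < x) (k : ℕ) :
    caputo q (fun y => y ^ k) x =
      if ⌈q⌉₊ ≤ k then (k.factorial : ℝ) / Real.Gamma ((k : ℝ) - q + 1) * x ^ ((k : ℝ) - q)
      else 0 := by
  simp only [caputo, iteratedDeriv_pow]
  split_ifs with hk
  · obtain ⟨n, rfl⟩ := Nat.exists_eq_add_of_le hk
    have hp : 0 < (⌈q⌉₊ : ℝ) - q := sub_pos.2 hq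
    have hbeta : ∫ t in (0:ℝ)..x, (x - t) ^ ((⌈q⌉₊ : ℝ) - q - 1) * t ^ n =
        Real.Gamma ((⌈q⌉₊ : ℝ) - q) * n.factorial / Real.Gamma (((⌈q⌉₊ + n : ℕ) : ℝ) - q + 1) *
          x ^ (((⌈q⌉₊ + n : ℕ) : ℝ) - q) := by
      have h := integral_sub_rpow_mul_rpow (a := n + 1) (by positivity) hp hx
      simp only [add_sub_cancel_right, Real.rpow_natCast, Real.Gamma_nat_eq_factorial] at h
      rw [h]; push_cast; ring_nf
    have hfact : ((⌈q⌉₊ + n).descFactorial ⌈q⌉₊ : ℝ) * n.factorial = (⌈q⌉₊ + n).factorial := by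
      have h := Nat.factorial_mul_descFactorial (Nat.le_add_right ⌈q⌉₊ n)
      rw [Nat.add_sub_cancel_left, mul_comm] at h
      exact_mod_cast h
    simp only [Nat.add_sub_cancel_left, mul_left_comm _ (((⌈q⌉₊ + n).descFactorial ⌈q⌉₊ : ℕ) : ℝ),
      intervalIntegral.integral_const_mul, hbeta, ← hfact]
    field_simp [(Real.Gamma_pos_of_pos hp).ne']
  · simp [Nat.descFactorial_eq_zero_iff_lt.2 (not_le.1 hk)]

end Caputo

-- The `if` is needed: for `2 * r > n` the exponent `n - 2 * r` truncates to `0`.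
noncomputable def gegenCoef (lam : ℝ) (n r : ℕ) : ℝ :=
  if 2 * r ≤ n then
    (-1) ^ r * (ascPochhammer ℝ (n - r)).eval lam / (r.factorial * (n - 2 * r).factorial)
  else 0

section GegenCoef

variable {lam : ℝ}

lemma gegenCoef_of_lt {n r : ℕ} (h : n < 2 * r) : gegenCoef lam n r = 0 :=
  if_neg (not_le.2 h)

lemma gegenCoef_mul_pow_mul (n r : ℕ) (y : ℝ) :
    gegenCoef lam n r * y ^ (n - 2 * r) * y = gegenCoef lam n r * y ^ (n + 1 - 2 * r) := by
  by_cases h : 2 * r ≤ n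
  · rw [mul_assoc, ← pow_succ, Nat.sub_add_comm h]
  · rw [gegenCoef_of_lt (not_le.1 h)]; ring

lemma gegenCoef_add_two_zero (j : ℕ) :
    (j + 2 : ℝ) * gegenCoef lam (j + 2) 0 = (j + 1 + lam) * gegenCoef lam (j + 1) 0 := by
  simp only [gegenCoef, mul_zero, zero_le, if_true, Nat.sub_zero, pow_zero, one_mul,
    Nat.factorial_zero, Nat.cast_one, ascPochhammer_succ_eval (j + 1), Nat.factorial_succ (j + 1)]
  push_cast
  field_simp
  ring

lemma gegenCoef_add_two_succ (j r : ℕ) :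
    (j + 2 : ℝ) * gegenCoef lam (j + 2) (r + 1) =
      (j + 1 + lam) * gegenCoef lam (j + 1) (r + 1) - (j + 2 * lam) * gegenCoef lam j r := by
  rcases lt_trichotomy (2 * r) j with h | rfl | h
  · obtain ⟨s, rfl⟩ := Nat.exists_eq_add_of_lt h
    simp only [gegenCoef, if_pos (show 2 * (r + 1) ≤ 2 * r + s + 1 + 2 by omega),
      if_pos (show 2 * (r + 1) ≤ 2 * r + s + 1 + 1 by omega),
      if_pos (show 2 * r ≤ 2 * r + s + 1 by omega),
      show 2 * r + s + 1 + 2 - (r + 1) = r + s + 1 + 1 by omega,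
      show 2 * r + s + 1 + 1 - (r + 1) = r + s + 1 by omega,
      show 2 * r + s + 1 - r = r + s + 1 by omega,
      show 2 * r + s + 1 + 2 - 2 * (r + 1) = s + 1 by omega,
      show 2 * r + s + 1 + 1 - 2 * (r + 1) = s by omega,
      show 2 * r + s + 1 - 2 * r = s + 1 by omega,
      ascPochhammer_succ_eval (r + s + 1), Nat.factorial_succ s, Nat.factorial_succ r]
    push_cast
    field_simp
    ring
  · rw [gegenCoef_of_lt (show 2 * r + 1 < 2 * (r + 1) by omega)]
    simp only [gegenCoef, le_refl, if_pos (show 2 * (r + 1) ≤ 2 * r + 2 by omega),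
      show 2 * r + 2 - (r + 1) = r + 1 by omega, show 2 * r - r = r by omega,
      show 2 * r + 2 - 2 * (r + 1) = 0 by omega, Nat.sub_self, ascPochhammer_succ_eval r,
      Nat.factorial_succ r]
    push_cast
    field_simp
    ring
  · simp only [gegenCoef_of_lt h, gegenCoef_of_lt (show j + 1 < 2 * (r + 1) by omega),
      gegenCoef_of_lt (show j + 2 < 2 * (r + 1) by omega)]
    ring

end GegenCoef

lemma gegen_eval_eq_sum (lam : ℝ) :
    ∀ (n N : ℕ), n < 2 * N → ∀ t : ℝ,
      (gegen lam n).eval t = ∑ r ∈ Finset.range N, gegenCoef lam n r * (2 * t) ^ (n - 2 * r)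
  | 0, N, hN, t => by
    rw [Finset.sum_eq_single_of_mem 0 (Finset.mem_range.2 (by omega))
      fun r _ hr => by rw [gegenCoef_of_lt (by omega), zero_mul]]
    simp [gegen, gegenCoef]
  | 1, N, hN, t => by
    rw [Finset.sum_eq_single_of_mem 0 (Finset.mem_range.2 (by omega))
      fun r _ hr => by rw [gegenCoef_of_lt (by omega), zero_mul]]
    simp [gegen, gegenCoef, mul_left_comm, mul_comm]
  | j + 2, 0, hN, _ => absurd hN (by omega)
  | j + 2, N + 1, hN, t => by
    have hj1 := gegen_eval_eq_sum lam (j + 1) (N + 1) (by omega) t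
    have hj := gegen_eval_eq_sum lam j N (by omega) t
    have hj2 : (j + 2 : ℝ) ≠ 0 := by positivity
    have hterm (r : ℕ) : gegenCoef lam (j + 2) (r + 1) * (2 * t) ^ (j + 2 - 2 * (r + 1)) =
        (j + 1 + lam) / (j + 2) * (gegenCoef lam (j + 1) (r + 1) *
          (2 * t) ^ (j + 1 - 2 * (r + 1)) * (2 * t)) -
        (j + 2 * lam) / (j + 2) * (gegenCoef lam j r * (2 * t) ^ (j - 2 * r)) := by
      rw [gegenCoef_mul_pow_mul, show j + 1 + 1 - 2 * (r + 1) = j - 2 * r by omega,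
        eq_div_of_mul_eq hj2 ((mul_comm _ _).trans (gegenCoef_add_two_succ j r))]
      ring
    have hzero : gegenCoef lam (j + 2) 0 * (2 * t) ^ (j + 2 - 2 * 0) =
        (j + 1 + lam) / (j + 2) *
          (gegenCoef lam (j + 1) 0 * (2 * t) ^ (j + 1 - 2 * 0) * (2 * t)) := by
      rw [gegenCoef_mul_pow_mul,
        eq_div_of_mul_eq hj2 ((mul_comm _ _).trans (gegenCoef_add_two_zero j))]
      ring
    simp only [gegen, eval_sub, eval_mul, eval_C, eval_X, hj1, hj]
    rw [Finset.sum_range_succ', Finset.sum_range_succ', Finset.sum_congr rfl fun r _ => hterm r,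
      hzero, Finset.sum_sub_distrib, ← Finset.mul_sum, ← Finset.mul_sum, ← Finset.sum_mul]
    ring

lemma shiftedMonicUltra_eval (lam : ℝ) (j : ℕ) (y : ℝ) :
    (shiftedMonicUltra lam j).eval y = Hcoef lam j *
      ∑ r ∈ Finset.range (j / 2 + 1), ∑ k ∈ Finset.range (j - 2 * r + 1),
        (-1 : ℝ) ^ (j - r - k) * (ascPochhammer ℝ (j - r)).eval lam * 2 ^ (j - 2 * r + k) /
          (r.factorial * k.factorial * (j - 2 * r - k).factorial) * y ^ k := by
  rw [shiftedMonicUltra, eval_mul, eval_C, eval_comp,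
    gegen_eval_eq_sum lam j (j / 2 + 1) (by omega)]
  congr 1
  refine Finset.sum_congr rfl fun r hr => ?_
  have hr : 2 * r ≤ j := by rw [Finset.mem_range] at hr; omega
  simp only [eval_sub, eval_mul, eval_C, eval_X, eval_one, mul_pow, gegenCoef, if_pos hr,
    sub_eq_add_neg (2 * y), add_pow, Finset.mul_sum]
  refine Finset.sum_congr rfl fun k hk => ?_
  have hk : k ≤ j - 2 * r := by rw [Finset.mem_range] at hk; omega
  have hfact : ((j - 2 * r).factorial : ℝ) =
      (j - 2 * r).choose k * k.factorial * (j - 2 * r - k).factorial := by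
    exact_mod_cast (Nat.choose_mul_factorial_mul_factorial hk).symm
  have hsign : (-1 : ℝ) ^ (j - r - k) = (-1) ^ r * (-1) ^ (j - 2 * r - k) := by
    rw [← pow_add]; congr 1; omega
  have hchoose : ((j - 2 * r).choose k : ℝ) ≠ 0 := by exact_mod_cast (Nat.choose_pos hk).ne'
  rw [hfact, hsign, pow_add]
  field_simp

lemma Finset.filter_le_range_succ (m n : ℕ) :
    (Finset.range (n + 1)).filter (m ≤ ·) = Finset.Icc m n := by
  ext k; simp only [Finset.mem_filter, Finset.mem_range, Finset.mem_Icc]; omega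

theorem caputo_shiftedMonicUltra_analytic_general (lam q : ℝ) (hlam : -1/2 < lam) (hlam0 : lam ≠ 0)
    (hqnat : ∀ n : ℕ, q ≠ n) (j : ℕ) (x : ℝ) (hx : 0 < x) :
    caputo q (fun y => (shiftedMonicUltra lam j).eval y) x =
      Hcoef lam j * ∑ r ∈ Finset.range (j / 2 + 1), ∑ k ∈ Finset.Icc ⌈q⌉₊ (j - 2 * r),
        (-1 : ℝ) ^ (j - r - k) * Real.Gamma ((j : ℝ) - r + lam) * 2 ^ (j - 2 * r + k) /
          (Real.Gamma lam * (r.factorial : ℝ) * Real.Gamma ((k : ℝ) - q + 1) *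
            ((j - 2 * r - k).factorial : ℝ)) * x ^ ((k : ℝ) - q) := by
  have hq' : q < ⌈q⌉₊ := (Nat.le_ceil q).lt_of_ne (hqnat _)
  have hlam_nat : ∀ k : ℕ, lam ≠ -k := by
    rintro (_ | k) h
    · exact hlam0 (by simpa using h)
    · push_cast at h; linarith [(k.cast_nonneg : (0 : ℝ) ≤ k)]
  have hΓ : Real.Gamma lam ≠ 0 := Real.Gamma_ne_zero hlam_nat
  simp only [shiftedMonicUltra_eval]
  rw [caputo_const_mul, caputo_finset_sum (hq := hq') (hf := fun _ _ => by fun_prop)]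
  congr 1
  refine Finset.sum_congr rfl fun r hr => ?_
  have hr : 2 * r ≤ j := by rw [Finset.mem_range] at hr; omega
  rw [caputo_finset_sum (hq := hq') (hf := fun _ _ => by fun_prop)]
  simp only [caputo_const_mul, caputo_pow hq' hx, mul_ite, mul_zero]
  rw [← Finset.sum_filter, Finset.filter_le_range_succ]
  refine Finset.sum_congr rfl fun k hk => ?_
  have hk : q < k := hq'.trans_le (by exact_mod_cast (Finset.mem_Icc.1 hk).1)
  have hpoch :
      Real.Gamma ((j : ℝ) - r + lam) = Real.Gamma lam * (ascPochhammer ℝ (j - r)).eval lam := by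
    rw [← Real.Gamma_natCast_add_eq_mul_ascPochhammer hlam_nat, Nat.cast_sub (by omega)]
  rw [hpoch]
  field_simp [(Real.Gamma_pos_of_pos (by linarith : 0 < (k : ℝ) - q + 1)).ne']

/-- Theorem 3.2: Caputo fractional derivative of the shifted monic ultraspherical
polynomial in explicit form. -/
theorem caputo_shiftedMonicUltra_analytic (lam q : ℝ) (hlam : -1/2 < lam) (hlam0 : lam ≠ 0)
    (hq : 0 < q) (hqnat : ∀ n : ℕ, q ≠ n) (j : ℕ) (hj : ⌈q⌉₊ ≤ j) (x : ℝ) (hx : 0 < x) :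
    caputo q (fun y => (shiftedMonicUltra lam j).eval y) x =
      Hcoef lam j * ∑ r ∈ Finset.range (j / 2 + 1), ∑ k ∈ Finset.Icc ⌈q⌉₊ (j - 2 * r),
        (-1 : ℝ) ^ (j - r - k) * Real.Gamma ((j : ℝ) - r + lam) * 2 ^ (j - 2 * r + k) /
          (Real.Gamma lam * (r.factorial : ℝ) * Real.Gamma ((k : ℝ) - q + 1) *
            ((j - 2 * r - k).factorial : ℝ)) * x ^ ((k : ℝ) - q) :=
  caputo_shiftedMonicUltra_analytic_general lam q hlam hlam0 hqnat j x hx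
end

section
/- Let λ > −1/2 with λ ≠ 0 and let j ∈ ℕ. Then the shifted monic ultraspherical polynomial admits the analytic form Č_j^λ(x) = H_j · Σ_{r=0}^{⌊j/2⌋} Σ_{k=0}^{j−2r} (−1)^{j−r−k} · Γ(j−r+λ) · 2^{j−2r+k} / (Γ(λ) · r! · k! · (j−2r−k)!) · x^k for all x. -/
open Real Polynomial MeasureTheory

/-!
Comparing coefficients in the three-term recurrence gives, for every real `λ`,
`C_j^λ(t) = ∑_r (-1)^r (λ)_{j-r} (2t)^{j-2r} / (r! (j-2r)!)` with the rising factorial `(λ)_n`.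
When `λ` is not a non-positive integer, `(λ)_{j-r} = Γ(j-r+λ) / Γ(λ)`, and expanding
`(2x-1)^{j-2r}` binomially turns each term into the inner sum over `k`.
-/

open Finset

namespace Real

theorem Gamma_add_nat_div_Gamma_eq {n : ℕ} (z : ℝ) (hz : ∀ k : ℕ, z ≠ -k) :
    Gamma (z + n) / Gamma z = (ascPochhammer ℝ n).eval z := by
  induction n with
  | zero => simp [Gamma_ne_zero hz]
  | succ n ih =>
    have hzn : z + n ≠ 0 := fun h ↦ hz n (by linarith)
    rw [Nat.cast_succ, ← add_assoc, Gamma_add_one hzn, mul_div_assoc, ih, ascPochhammer_succ_eval,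
      mul_comm]

end Real

theorem add_pow_div_factorial {K : Type*} [Field K] [CharZero K] (x y : K) (m : ℕ) :
    (x + y) ^ m / m.factorial =
      ∑ k ∈ range (m + 1), x ^ k * y ^ (m - k) / (k.factorial * (m - k).factorial) := by
  rw [add_pow, sum_div]
  refine sum_congr rfl fun k hk ↦ ?_
  have hm : (m.factorial : K) ≠ 0 := by exact_mod_cast m.factorial_ne_zero
  rw [Nat.cast_choose K (Nat.lt_succ_iff.mp (mem_range.mp hk))]
  field_simp

/-- The coefficient of `t ^ (j - 2 * r)` in `C_j^λ(t)`, extended by zero to `2 * r > j`. -/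
noncomputable def gegenCoeff (lam : ℝ) (j r : ℕ) : ℝ :=
  if 2 * r ≤ j then
    (-1) ^ r * (ascPochhammer ℝ (j - r)).eval lam * 2 ^ (j - 2 * r) /
      (r.factorial * (j - 2 * r).factorial)
  else 0

theorem gegenCoeff_of_lt {lam : ℝ} {j r : ℕ} (h : j < 2 * r) : gegenCoeff lam j r = 0 :=
  if_neg (Nat.not_le.mpr h)

theorem mul_gegenCoeff_mul_pow (lam t : ℝ) (j r : ℕ) :
    t * (gegenCoeff lam j r * t ^ (j - 2 * r)) = gegenCoeff lam j r * t ^ (j + 1 - 2 * r) := by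
  rcases le_or_gt (2 * r) j with h | h
  · rw [Nat.sub_add_comm h, pow_succ]
    ring
  · simp [gegenCoeff_of_lt h]

theorem gegenCoeff_succ_succ_zero (lam : ℝ) (j : ℕ) :
    gegenCoeff lam (j + 2) 0 =
      2 * ((j : ℝ) + 1 + lam) / ((j : ℝ) + 2) * gegenCoeff lam (j + 1) 0 := by
  simp only [gegenCoeff, Nat.zero_le, if_true, Nat.sub_zero, mul_zero, pow_zero,
    Nat.factorial_zero]
  rw [ascPochhammer_succ_eval, pow_succ, Nat.factorial_succ]
  push_cast
  field_simp
  ring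

theorem gegenCoeff_succ_succ_succ (lam : ℝ) (j r : ℕ) :
    gegenCoeff lam (j + 2) (r + 1) =
      2 * ((j : ℝ) + 1 + lam) / ((j : ℝ) + 2) * gegenCoeff lam (j + 1) (r + 1)
        - ((j : ℝ) + 1 + 2 * lam - 1) / ((j : ℝ) + 2) * gegenCoeff lam j r := by
  rcases lt_trichotomy (2 * r) j with h | rfl | h
  · obtain ⟨m, rfl⟩ : ∃ m, j = 2 * r + 1 + m := ⟨j - (2 * r + 1), by omega⟩
    simp only [gegenCoeff, if_pos (by omega : 2 * (r + 1) ≤ 2 * r + 1 + m + 2),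
      if_pos (by omega : 2 * (r + 1) ≤ 2 * r + 1 + m + 1),
      if_pos (by omega : 2 * r ≤ 2 * r + 1 + m)]
    rw [show 2 * r + 1 + m + 2 - (r + 1) = r + m + 1 + 1 by omega,
      show 2 * r + 1 + m + 1 - (r + 1) = r + m + 1 by omega,
      show 2 * r + 1 + m - r = r + m + 1 by omega,
      show 2 * r + 1 + m + 2 - 2 * (r + 1) = m + 1 by omega,
      show 2 * r + 1 + m + 1 - 2 * (r + 1) = m by omega,
      show 2 * r + 1 + m - 2 * r = m + 1 by omega,
      ascPochhammer_succ_eval, Nat.factorial_succ m, Nat.factorial_succ r]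
    push_cast
    field_simp
    ring
  · simp only [gegenCoeff, if_pos (by omega : 2 * (r + 1) ≤ 2 * r + 2),
      if_neg (by omega : ¬ 2 * (r + 1) ≤ 2 * r + 1), le_refl, if_true]
    rw [show 2 * r + 2 - (r + 1) = r + 1 by omega, show 2 * r + 2 - 2 * (r + 1) = 0 by omega,
      show 2 * r - r = r by omega, Nat.sub_self, ascPochhammer_succ_eval, Nat.factorial_succ r]
    push_cast
    field_simp
    ring
  · rw [gegenCoeff_of_lt (by omega), gegenCoeff_of_lt (by omega), gegenCoeff_of_lt (by omega)]
    ring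

theorem eval_gegen_eq_sum (lam t : ℝ) :
    ∀ {j N : ℕ}, j < 2 * N →
      (gegen lam j).eval t = ∑ r ∈ range N, gegenCoeff lam j r * t ^ (j - 2 * r)
  | 0, N, hN => by
    rw [sum_eq_single_of_mem 0 (mem_range.mpr (by omega))
      fun r _ hr ↦ by rw [gegenCoeff_of_lt (by omega), zero_mul]]
    simp [gegen, gegenCoeff]
  | 1, N, hN => by
    rw [sum_eq_single_of_mem 0 (mem_range.mpr (by omega))
      fun r _ hr ↦ by rw [gegenCoeff_of_lt (by omega), zero_mul]]
    simp [gegen, gegenCoeff, mul_comm]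
  | j + 2, N, hN => by
    obtain ⟨M, rfl⟩ : ∃ M, N = M + 1 := ⟨N - 1, by omega⟩
    have hexp : ∀ r, j + 2 - 2 * (r + 1) = j - 2 * r := fun r ↦ by omega
    have hj1 := eval_gegen_eq_sum lam t (j := j + 1) (N := M + 1) (by omega)
    have hj := eval_gegen_eq_sum lam t (j := j) (N := M) (by omega)
    simp only [gegen, eval_sub, eval_mul, eval_C, eval_X, hj1, hj, mul_assoc, mul_sum,
      mul_gegenCoeff_mul_pow]
    rw [sum_range_succ', sum_range_succ', gegenCoeff_succ_succ_zero]
    simp only [hexp, gegenCoeff_succ_succ_succ, sub_mul, mul_assoc, sum_sub_distrib]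
    ring

theorem gegenCoeff_mul_two_mul_sub_one_pow {lam : ℝ} (hlam : ∀ k : ℕ, lam ≠ -k) {j r : ℕ}
    (hr : 2 * r ≤ j) (x : ℝ) :
    gegenCoeff lam j r * (2 * x - 1) ^ (j - 2 * r) =
      ∑ k ∈ range (j - 2 * r + 1),
        (-1 : ℝ) ^ (j - r - k) * Gamma ((j : ℝ) - r + lam) * 2 ^ (j - 2 * r + k) /
          (Gamma lam * (r.factorial : ℝ) * (k.factorial : ℝ) *
            ((j - 2 * r - k).factorial : ℝ)) * x ^ k := by
  have hGamma : Gamma ((j : ℝ) - r + lam) = Gamma lam * (ascPochhammer ℝ (j - r)).eval lam := by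
    rw [← Real.Gamma_add_nat_div_Gamma_eq lam hlam, Nat.cast_sub (by omega), add_comm,
      mul_div_cancel₀ _ (Gamma_ne_zero hlam)]
  have hexpand : gegenCoeff lam j r * (2 * x - 1) ^ (j - 2 * r) =
      (-1) ^ r * (ascPochhammer ℝ (j - r)).eval lam * 2 ^ (j - 2 * r) / r.factorial *
        ((2 * x + -1) ^ (j - 2 * r) / (j - 2 * r).factorial) := by
    rw [gegenCoeff, if_pos hr, ← sub_eq_add_neg]
    field_simp
  rw [hexpand, add_pow_div_factorial, mul_sum]
  refine sum_congr rfl fun k hk ↦ ?_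
  have hk : k ≤ j - 2 * r := Nat.lt_succ_iff.mp (mem_range.mp hk)
  rw [show j - r - k = r + (j - 2 * r - k) by omega, hGamma, pow_add, pow_add, mul_pow]
  field_simp [Gamma_ne_zero hlam]

/-- Analytic form of the shifted monic ultraspherical polynomial. -/
theorem shiftedMonicUltra_analytic (lam : ℝ) (hlam : -1/2 < lam) (hlam0 : lam ≠ 0)
    (j : ℕ) (x : ℝ) :
    (shiftedMonicUltra lam j).eval x =
      Hcoef lam j * ∑ r ∈ Finset.range (j / 2 + 1), ∑ k ∈ Finset.range (j - 2 * r + 1),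
        (-1 : ℝ) ^ (j - r - k) * Real.Gamma ((j : ℝ) - r + lam) * 2 ^ (j - 2 * r + k) /
          (Real.Gamma lam * (r.factorial : ℝ) * (k.factorial : ℝ) *
            ((j - 2 * r - k).factorial : ℝ)) * x ^ k := by
  have hlam_nat : ∀ k : ℕ, lam ≠ -k := by
    rintro (_ | k) h
    · exact hlam0 (by simpa using h)
    · push_cast at h
      linarith [k.cast_nonneg (α := ℝ)]
  rw [shiftedMonicUltra, eval_mul, eval_C, eval_comp,
    eval_gegen_eq_sum lam _ (N := j / 2 + 1) (by omega)]
  congr 1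
  refine sum_congr rfl fun r hr ↦ ?_
  simp only [eval_sub, eval_mul, eval_C, eval_X, eval_one]
  exact gegenCoeff_mul_two_mul_sub_one_pow hlam_nat (by have := mem_range.mp hr; omega) x
end
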